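/- arXiv:math/0703484 — 2 statements merged into one kernel-verified Lean document; each statement's English description precedes it below -/
import Mathlib

section
/- Let n, d ≥ 1, let r ≥ 0 and θ ≥ 0 be real constants, and let f : ℝᵈ × ℝ^{n×d} → ℝᵈ be twice continuously differentiable such that for every (y,z) the second partial derivatives satisfy ‖f_{yy}(y,z)‖ ≤ r², ‖f_{yz}(y,z)‖ ≤ θ·r and ‖f_{zz}(y,z)‖ ≤ θ² (operator norms). Fix an arbitrary base point (ỹ, z̃) ∈ ℝᵈ × ℝ^{n×d} and set α := f_y(ỹ,z̃) and Γ := f_z(ỹ,z̃). Then for all y₁, y₂ ∈ ℝᵈ and z₁, z₂ ∈ ℝ^{n×d}: ‖f(ỹ+y₁, z̃+z₁) − f(ỹ+y₂, z̃+z₂) − α(y₁−y₂) − Γ(z₁−z₂)‖ ≤ (r‖y₁−y₂‖ + θ‖z₁−z₂‖)·(r(‖y₁‖+‖y₂‖) + θ(‖z₁‖+‖z₂‖)), where the right-hand side involves the norms of the increments y₁, y₂, z₁, z₂ themselves (not of the shifted points). -/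
set_option maxHeartbeats 1000000

private lemma seg_norm {E : Type*} [NormedAddCommGroup E] [NormedSpace ℝ E]
    {a b x : E} (hx : x ∈ segment ℝ a b) : ‖x‖ ≤ ‖a‖ + ‖b‖ := by
  obtain ⟨s, t, hs, ht, hst, rfl⟩ := hx
  calc ‖s • a + t • b‖ ≤ ‖s • a‖ + ‖t • b‖ := norm_add_le _ _
    _ = s * ‖a‖ + t * ‖b‖ := by
        rw [norm_smul, norm_smul, Real.norm_of_nonneg hs, Real.norm_of_nonneg ht]
    _ ≤ 1 * ‖a‖ + 1 * ‖b‖ := by gcongr <;> linarith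
    _ = ‖a‖ + ‖b‖ := by ring

open ContinuousLinearMap in
/-- estimate from the proof of Lemma 2 of the paper.
If `f : ℝᵈ × ℝ^{n×d} → ℝᵈ` is twice continuously differentiable with second partial
derivatives bounded by `‖f_yy‖ ≤ r²`, `‖f_yz‖ ≤ θ·r` and `‖f_zz‖ ≤ θ²`, then for any
base point `(ỹ, z̃)`, with `α = f_y(ỹ,z̃)` and `Γ = f_z(ỹ,z̃)`, the shifted generator
satisfies the quadratic-Lipschitz estimate of condition A) in the increments. -/
theorem stmt_2 (n d : ℕ) (hn : 1 ≤ n) (hd : 1 ≤ d) (r θ : ℝ) (hr : 0 ≤ r) (hθ : 0 ≤ θ)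
    (f : EuclideanSpace ℝ (Fin d) × EuclideanSpace ℝ (Fin n × Fin d) → EuclideanSpace ℝ (Fin d))
    (hf : ContDiff ℝ 2 f)
    -- the partial Fréchet derivatives of `f` in the first and second variable
    (fy : EuclideanSpace ℝ (Fin d) → EuclideanSpace ℝ (Fin n × Fin d) →
      (EuclideanSpace ℝ (Fin d) →L[ℝ] EuclideanSpace ℝ (Fin d)))
    (fz : EuclideanSpace ℝ (Fin d) → EuclideanSpace ℝ (Fin n × Fin d) →
      (EuclideanSpace ℝ (Fin n × Fin d) →L[ℝ] EuclideanSpace ℝ (Fin d)))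
    (hfy : ∀ y z, fy y z = fderiv ℝ (fun y' => f (y', z)) y)
    (hfz : ∀ y z, fz y z = fderiv ℝ (fun z' => f (y, z')) z)
    -- bounds on the second partial derivatives (operator norms)
    (hyy : ∀ y z, ‖fderiv ℝ (fun y' => fy y' z) y‖ ≤ r ^ 2)
    (hyz : ∀ y z, ‖fderiv ℝ (fun z' => fy y z') z‖ ≤ θ * r)
    (hzy : ∀ y z, ‖fderiv ℝ (fun y' => fz y' z) y‖ ≤ θ * r)
    (hzz : ∀ y z, ‖fderiv ℝ (fun z' => fz y z') z‖ ≤ θ ^ 2)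
    (ytil : EuclideanSpace ℝ (Fin d)) (ztil : EuclideanSpace ℝ (Fin n × Fin d))
    (α : EuclideanSpace ℝ (Fin d) →L[ℝ] EuclideanSpace ℝ (Fin d))
    (Γ : EuclideanSpace ℝ (Fin n × Fin d) →L[ℝ] EuclideanSpace ℝ (Fin d))
    (hα : α = fy ytil ztil) (hΓ : Γ = fz ytil ztil) :
    ∀ (y₁ y₂ : EuclideanSpace ℝ (Fin d)) (z₁ z₂ : EuclideanSpace ℝ (Fin n × Fin d)),
      ‖f (ytil + y₁, ztil + z₁) - f (ytil + y₂, ztil + z₂) - α (y₁ - y₂) - Γ (z₁ - z₂)‖ ≤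
        (r * ‖y₁ - y₂‖ + θ * ‖z₁ - z₂‖) *
          (r * (‖y₁‖ + ‖y₂‖) + θ * (‖z₁‖ + ‖z₂‖)) := by
  intro y₁ y₂ z₁ z₂
  have hfd : Differentiable ℝ f := hf.differentiable (by norm_num)
  have hDf : ContDiff ℝ 1 (fderiv ℝ f) := hf.fderiv_right (by norm_num)
  set Fy : (EuclideanSpace ℝ (Fin d)) × (EuclideanSpace ℝ (Fin n × Fin d)) → ((EuclideanSpace ℝ (Fin d)) →L[ℝ] (EuclideanSpace ℝ (Fin d))) := fun p => (fderiv ℝ f p).comp (inl ℝ (EuclideanSpace ℝ (Fin d)) (EuclideanSpace ℝ (Fin n × Fin d))) with hFydef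
  set Fz : (EuclideanSpace ℝ (Fin d)) × (EuclideanSpace ℝ (Fin n × Fin d)) → ((EuclideanSpace ℝ (Fin n × Fin d)) →L[ℝ] (EuclideanSpace ℝ (Fin d))) := fun p => (fderiv ℝ f p).comp (inr ℝ (EuclideanSpace ℝ (Fin d)) (EuclideanSpace ℝ (Fin n × Fin d))) with hFzdef
  have hFyD : Differentiable ℝ Fy :=
    (hDf.differentiable one_ne_zero).clm_comp (differentiable_const _)
  have hFzD : Differentiable ℝ Fz :=
    (hDf.differentiable one_ne_zero).clm_comp (differentiable_const _)
  have hfy2 : ∀ y z, fy y z = Fy (y, z) := by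
    intro y z
    rw [hfy]
    exact (((hfd (y, z)).hasFDerivAt).comp y (hasFDerivAt_prodMk_left y z)).fderiv
  have hfz2 : ∀ y z, fz y z = Fz (y, z) := by
    intro y z
    rw [hfz]
    exact (((hfd (y, z)).hasFDerivAt).comp z (hasFDerivAt_prodMk_right y z)).fderiv
  simp only [hfy2, hfz2] at hyy hyz hzy hzz hα hΓ
  have LipYy : ∀ (z : (EuclideanSpace ℝ (Fin n × Fin d))) (a b : (EuclideanSpace ℝ (Fin d))), ‖Fy (a, z) - Fy (b, z)‖ ≤ r ^ 2 * ‖a - b‖ := fun z a b =>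
    convex_univ.norm_image_sub_le_of_norm_fderiv_le
      (fun x _ => (hFyD.comp (differentiable_id.prodMk (differentiable_const z))).differentiableAt)
      (fun x _ => hyy x z) (Set.mem_univ b) (Set.mem_univ a)
  have LipYz : ∀ (y : (EuclideanSpace ℝ (Fin d))) (a b : (EuclideanSpace ℝ (Fin n × Fin d))), ‖Fy (y, a) - Fy (y, b)‖ ≤ (θ * r) * ‖a - b‖ := fun y a b =>
    convex_univ.norm_image_sub_le_of_norm_fderiv_le
      (fun x _ => (hFyD.comp ((differentiable_const y).prodMk differentiable_id)).differentiableAt)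
      (fun x _ => hyz y x) (Set.mem_univ b) (Set.mem_univ a)
  have LipZy : ∀ (z : (EuclideanSpace ℝ (Fin n × Fin d))) (a b : (EuclideanSpace ℝ (Fin d))), ‖Fz (a, z) - Fz (b, z)‖ ≤ (θ * r) * ‖a - b‖ := fun z a b =>
    convex_univ.norm_image_sub_le_of_norm_fderiv_le
      (fun x _ => (hFzD.comp (differentiable_id.prodMk (differentiable_const z))).differentiableAt)
      (fun x _ => hzy x z) (Set.mem_univ b) (Set.mem_univ a)
  have LipZz : ∀ (y : (EuclideanSpace ℝ (Fin d))) (a b : (EuclideanSpace ℝ (Fin n × Fin d))), ‖Fz (y, a) - Fz (y, b)‖ ≤ θ ^ 2 * ‖a - b‖ := fun y a b =>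
    convex_univ.norm_image_sub_le_of_norm_fderiv_le
      (fun x _ => (hFzD.comp ((differentiable_const y).prodMk differentiable_id)).differentiableAt)
      (fun x _ => hzz y x) (Set.mem_univ b) (Set.mem_univ a)
  have keyY : ∀ (y : (EuclideanSpace ℝ (Fin d))) (z : (EuclideanSpace ℝ (Fin n × Fin d))), ‖Fy (ytil + y, ztil + z) - α‖ ≤ r ^ 2 * ‖y‖ + θ * r * ‖z‖ := by
    intro y z
    calc ‖Fy (ytil + y, ztil + z) - α‖
        ≤ ‖Fy (ytil + y, ztil + z) - Fy (ytil, ztil + z)‖ +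
            ‖Fy (ytil, ztil + z) - Fy (ytil, ztil)‖ := by
          rw [hα]; exact norm_sub_le_norm_sub_add_norm_sub _ _ _
      _ ≤ r ^ 2 * ‖ytil + y - ytil‖ + θ * r * ‖ztil + z - ztil‖ :=
          add_le_add (LipYy _ _ _) (LipYz _ _ _)
      _ = r ^ 2 * ‖y‖ + θ * r * ‖z‖ := by rw [add_sub_cancel_left, add_sub_cancel_left]
  have keyZ : ∀ (y : (EuclideanSpace ℝ (Fin d))) (z : (EuclideanSpace ℝ (Fin n × Fin d))), ‖Fz (ytil + y, ztil + z) - Γ‖ ≤ θ * r * ‖y‖ + θ ^ 2 * ‖z‖ := by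
    intro y z
    calc ‖Fz (ytil + y, ztil + z) - Γ‖
        ≤ ‖Fz (ytil + y, ztil + z) - Fz (ytil, ztil + z)‖ +
            ‖Fz (ytil, ztil + z) - Fz (ytil, ztil)‖ := by
          rw [hΓ]; exact norm_sub_le_norm_sub_add_norm_sub _ _ _
      _ ≤ θ * r * ‖ytil + y - ytil‖ + θ ^ 2 * ‖ztil + z - ztil‖ :=
          add_le_add (LipZy _ _ _) (LipZz _ _ _)
      _ = θ * r * ‖y‖ + θ ^ 2 * ‖z‖ := by rw [add_sub_cancel_left, add_sub_cancel_left]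
  have hg1 : ∀ y : (EuclideanSpace ℝ (Fin d)), HasFDerivAt (fun y' => f (ytil + y', ztil + z₁) - α y')
      (Fy (ytil + y, ztil + z₁) - α) y := by
    intro y
    have hinner : HasFDerivAt (fun y' : (EuclideanSpace ℝ (Fin d)) => ((ytil + y' : (EuclideanSpace ℝ (Fin d))), (ztil + z₁ : (EuclideanSpace ℝ (Fin n × Fin d)))))
        ((inl ℝ (EuclideanSpace ℝ (Fin d)) (EuclideanSpace ℝ (Fin n × Fin d))).comp (ContinuousLinearMap.id ℝ (EuclideanSpace ℝ (Fin d)))) y :=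
      (hasFDerivAt_prodMk_left (ytil + y) (ztil + z₁)).comp y
        ((hasFDerivAt_id (𝕜 := ℝ) y).const_add ytil :)
    have h1 := ((hfd (ytil + y, ztil + z₁)).hasFDerivAt).comp y hinner
    have h2 := h1.sub (α.hasFDerivAt)
    refine HasFDerivAt.congr_fderiv h2 ?_
    simp [hFydef, ContinuousLinearMap.comp_assoc]
  have hg2 : ∀ z : (EuclideanSpace ℝ (Fin n × Fin d)), HasFDerivAt (fun z' => f (ytil + y₂, ztil + z') - Γ z')
      (Fz (ytil + y₂, ztil + z) - Γ) z := by
    intro z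
    have hinner : HasFDerivAt (fun z' : (EuclideanSpace ℝ (Fin n × Fin d)) => ((ytil + y₂ : (EuclideanSpace ℝ (Fin d))), (ztil + z' : (EuclideanSpace ℝ (Fin n × Fin d)))))
        ((inr ℝ (EuclideanSpace ℝ (Fin d)) (EuclideanSpace ℝ (Fin n × Fin d))).comp (ContinuousLinearMap.id ℝ (EuclideanSpace ℝ (Fin n × Fin d)))) z :=
      (hasFDerivAt_prodMk_right (ytil + y₂) (ztil + z)).comp z
        ((hasFDerivAt_id (𝕜 := ℝ) z).const_add ztil :)
    have h1 := ((hfd (ytil + y₂, ztil + z)).hasFDerivAt).comp z hinner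
    have h2 := h1.sub (Γ.hasFDerivAt)
    refine HasFDerivAt.congr_fderiv h2 ?_
    simp [hFzdef, ContinuousLinearMap.comp_assoc]
  set B : ℝ := r * (‖y₁‖ + ‖y₂‖) + θ * (‖z₁‖ + ‖z₂‖) with hB
  have step1 : ‖(f (ytil + y₁, ztil + z₁) - α y₁) - (f (ytil + y₂, ztil + z₁) - α y₂)‖ ≤
      (r * B) * ‖y₁ - y₂‖ := by
    refine (convex_segment y₂ y₁).norm_image_sub_le_of_norm_fderiv_le
      (fun x _ => (hg1 x).differentiableAt) (fun x hx => ?_)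
      (left_mem_segment ℝ y₂ y₁) (right_mem_segment ℝ y₂ y₁)
    rw [(hg1 x).fderiv]
    refine (keyY x z₁).trans ?_
    have h1 : ‖x‖ ≤ ‖y₂‖ + ‖y₁‖ := seg_norm hx
    have h2 : (0:ℝ) ≤ ‖z₂‖ := norm_nonneg _
    have h3 : (0:ℝ) ≤ ‖z₁‖ := norm_nonneg _
    have h4 : r ^ 2 * ‖x‖ ≤ r ^ 2 * (‖y₂‖ + ‖y₁‖) :=
      mul_le_mul_of_nonneg_left h1 (sq_nonneg r)
    have h5 : θ * r * ‖z₁‖ ≤ θ * r * (‖z₁‖ + ‖z₂‖) :=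
      mul_le_mul_of_nonneg_left (le_add_of_nonneg_right h2) (mul_nonneg hθ hr)
    rw [hB]; nlinarith []
  have step2 : ‖(f (ytil + y₂, ztil + z₁) - Γ z₁) - (f (ytil + y₂, ztil + z₂) - Γ z₂)‖ ≤
      (θ * B) * ‖z₁ - z₂‖ := by
    refine (convex_segment z₂ z₁).norm_image_sub_le_of_norm_fderiv_le
      (fun x _ => (hg2 x).differentiableAt) (fun x hx => ?_)
      (left_mem_segment ℝ z₂ z₁) (right_mem_segment ℝ z₂ z₁)
    rw [(hg2 x).fderiv]
    refine (keyZ y₂ x).trans ?_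
    have h1 : ‖x‖ ≤ ‖z₂‖ + ‖z₁‖ := seg_norm hx
    have h2 : (0:ℝ) ≤ ‖y₁‖ := norm_nonneg _
    have h3 : (0:ℝ) ≤ ‖y₂‖ := norm_nonneg _
    have h4 : θ ^ 2 * ‖x‖ ≤ θ ^ 2 * (‖z₂‖ + ‖z₁‖) :=
      mul_le_mul_of_nonneg_left h1 (sq_nonneg θ)
    have h5 : θ * r * ‖y₂‖ ≤ θ * r * (‖y₁‖ + ‖y₂‖) :=
      mul_le_mul_of_nonneg_left (le_add_of_nonneg_left h2) (mul_nonneg hθ hr)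
    rw [hB]; nlinarith []
  have hsplit : f (ytil + y₁, ztil + z₁) - f (ytil + y₂, ztil + z₂) - α (y₁ - y₂) - Γ (z₁ - z₂) =
      ((f (ytil + y₁, ztil + z₁) - α y₁) - (f (ytil + y₂, ztil + z₁) - α y₂)) +
      ((f (ytil + y₂, ztil + z₁) - Γ z₁) - (f (ytil + y₂, ztil + z₂) - Γ z₂)) := by
    rw [map_sub, map_sub]; abel
  calc ‖f (ytil + y₁, ztil + z₁) - f (ytil + y₂, ztil + z₂) - α (y₁ - y₂) - Γ (z₁ - z₂)‖
      ≤ (r * B) * ‖y₁ - y₂‖ + (θ * B) * ‖z₁ - z₂‖ := by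
        rw [hsplit]; exact (norm_add_le _ _).trans (add_le_add step1 step2)
    _ = (r * ‖y₁ - y₂‖ + θ * ‖z₁ - z₂‖) * B := by ring
end

section
/- Let n ≥ 1, let r ≥ 0, θ ≥ 0, L ≥ 0 be real constants, let α ∈ ℝ, γ ∈ ℝⁿ, and let f : ℝ × ℝⁿ → ℝ satisfy the quadratic-Lipschitz estimate with data (α, γ, r, θ), i.e. for all y₁, y₂ ∈ ℝ and z₁, z₂ ∈ ℝⁿ: |f(y₁,z₁) − f(y₂,z₂) − α(y₁−y₂) − ⟨γ, z₁−z₂⟩| ≤ (r|y₁−y₂| + θ‖z₁−z₂‖)·(r(|y₁|+|y₂|) + θ(‖z₁‖+‖z₂‖)). Let a ∈ ℝ with |a| ≤ L, and define f̄ : ℝ × ℝⁿ → ℝ by f̄(ȳ, z̄) := e^{a}·(f(e^{−a}ȳ, e^{−a}z̄) − f(0,0)) − α·ȳ − ⟨γ, z̄⟩. Then f̄ satisfies the quadratic-Lipschitz estimate with data (0, 0, r̄, θ̄), where r̄ = r·e^{L} and θ̄ = θ·e^{L}; that is, for all ȳ₁, ȳ₂ ∈ ℝ and z̄₁, z̄₂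 ∈ ℝⁿ: |f̄(ȳ₁,z̄₁) − f̄(ȳ₂,z̄₂)| ≤ (r̄|ȳ₁−ȳ₂| + θ̄‖z̄₁−z̄₂‖)·(r̄(|ȳ₁|+|ȳ₂|) + θ̄(‖z̄₁‖+‖z̄₂‖)). -/
/-!
Substituting `y = e⁻ᵃ ȳ`, `z = e⁻ᵃ z̄` turns a difference of `f̄` into `eᵃ` times the linearised
increment of `f`, which the hypothesis bounds by a quantity homogeneous of degree two in the
arguments. The net factor is therefore `eᵃ · e⁻²ᵃ = e⁻ᵃ ≤ e^{2L}`, and the estimate is also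
homogeneous of degree two in the constants `(r, θ)`, so this factor is absorbed by `r, θ ↦ r e^L, θ e^L`.
-/

open scoped RealInnerProductSpace

section

variable {E : Type*} [NormedAddCommGroup E]

def quadBound (r θ y₁ y₂ : ℝ) (z₁ z₂ : E) : ℝ :=
  (r * |y₁ - y₂| + θ * ‖z₁ - z₂‖) * (r * (|y₁| + |y₂|) + θ * (‖z₁‖ + ‖z₂‖))

theorem quadBound_mul_const (c r θ y₁ y₂ : ℝ) (z₁ z₂ : E) :
    quadBound (r * c) (θ * c) y₁ y₂ z₁ z₂ = c ^ 2 * quadBound r θ y₁ y₂ z₁ z₂ := by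
  simp only [quadBound]
  ring

theorem quadBound_smul [NormedSpace ℝ E] {b : ℝ} (hb : 0 ≤ b) (r θ y₁ y₂ : ℝ) (z₁ z₂ : E) :
    quadBound r θ (b * y₁) (b * y₂) (b • z₁) (b • z₂) = b ^ 2 * quadBound r θ y₁ y₂ z₁ z₂ := by
  simp only [quadBound, ← mul_sub, ← smul_sub, abs_mul, norm_smul, Real.norm_eq_abs,
    abs_of_nonneg hb]
  ring

variable [InnerProductSpace ℝ E]

def QuadraticLipschitz (f : ℝ → E → ℝ) (α : ℝ) (γ : E) (r θ : ℝ) : Prop :=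
  ∀ (y₁ y₂ : ℝ) (z₁ z₂ : E),
    |f y₁ z₁ - f y₂ z₂ - α * (y₁ - y₂) - ⟪γ, z₁ - z₂⟫| ≤ quadBound r θ y₁ y₂ z₁ z₂

theorem quadraticLipschitz_zero_zero_iff {f : ℝ → E → ℝ} {r θ : ℝ} :
    QuadraticLipschitz f 0 (0 : E) r θ ↔
      ∀ (y₁ y₂ : ℝ) (z₁ z₂ : E), |f y₁ z₁ - f y₂ z₂| ≤ quadBound r θ y₁ y₂ z₁ z₂ := by
  simp [QuadraticLipschitz]

noncomputable def rescaleGenerator (f : ℝ → E → ℝ) (α : ℝ) (γ : E) (b : ℝ) : ℝ → E → ℝ :=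
  fun y z => b⁻¹ * (f (b * y) (b • z) - f 0 0) - α * y - ⟪γ, z⟫

namespace QuadraticLipschitz

variable {f : ℝ → E → ℝ} {α : ℝ} {γ : E} {r θ : ℝ}

theorem of_sq_le {c d : ℝ} (hf : QuadraticLipschitz f α γ (r * c) (θ * c)) (hc : c ≠ 0)
    (hcd : c ^ 2 ≤ d ^ 2) : QuadraticLipschitz f α γ (r * d) (θ * d) := by
  intro y₁ y₂ z₁ z₂
  have hbound := hf y₁ y₂ z₁ z₂
  rw [quadBound_mul_const] at hbound
  have hQ : 0 ≤ quadBound r θ y₁ y₂ z₁ z₂ :=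
    nonneg_of_mul_nonneg_right ((abs_nonneg _).trans hbound) (by positivity)
  calc _ ≤ c ^ 2 * quadBound r θ y₁ y₂ z₁ z₂ := hbound
    _ ≤ d ^ 2 * quadBound r θ y₁ y₂ z₁ z₂ := mul_le_mul_of_nonneg_right hcd hQ
    _ = quadBound (r * d) (θ * d) y₁ y₂ z₁ z₂ := (quadBound_mul_const d r θ y₁ y₂ z₁ z₂).symm

theorem rescaleGenerator {b : ℝ} (hf : QuadraticLipschitz f α γ r θ) (hb : 0 < b) :
    QuadraticLipschitz (_root_.rescaleGenerator f α γ b) 0 0 (r * √b) (θ * √b) := by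
  rw [quadraticLipschitz_zero_zero_iff]
  intro y₁ y₂ z₁ z₂
  have hdiff : _root_.rescaleGenerator f α γ b y₁ z₁ - _root_.rescaleGenerator f α γ b y₂ z₂ =
      b⁻¹ * (f (b * y₁) (b • z₁) - f (b * y₂) (b • z₂) - α * (b * y₁ - b * y₂)
        - ⟪γ, b • z₁ - b • z₂⟫) := by
    simp only [_root_.rescaleGenerator, ← smul_sub, real_inner_smul_right, inner_sub_right]
    field_simp
    ring
  calc _ = b⁻¹ * |f (b * y₁) (b • z₁) - f (b * y₂) (b • z₂) - α * (b * y₁ - b * y₂)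
        - ⟪γ, b • z₁ - b • z₂⟫| := by rw [hdiff, abs_mul, abs_of_pos (inv_pos.2 hb)]
    _ ≤ b⁻¹ * quadBound r θ (b * y₁) (b * y₂) (b • z₁) (b • z₂) := by gcongr; exact hf ..
    _ = quadBound (r * √b) (θ * √b) y₁ y₂ z₁ z₂ := by
      rw [quadBound_smul hb.le, quadBound_mul_const, Real.sq_sqrt hb.le]
      field_simp

end QuadraticLipschitz

end

theorem stmt_3_general (n : ℕ) (r θ L : ℝ)
    (α : ℝ) (γ : EuclideanSpace ℝ (Fin n))
    (f : ℝ → EuclideanSpace ℝ (Fin n) → ℝ)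
    (hf : ∀ (y₁ y₂ : ℝ) (z₁ z₂ : EuclideanSpace ℝ (Fin n)),
      |f y₁ z₁ - f y₂ z₂ - α * (y₁ - y₂) - ⟪γ, z₁ - z₂⟫| ≤
        (r * |y₁ - y₂| + θ * ‖z₁ - z₂‖) * (r * (|y₁| + |y₂|) + θ * (‖z₁‖ + ‖z₂‖)))
    (a : ℝ) (ha : |a| ≤ L)
    (fbar : ℝ → EuclideanSpace ℝ (Fin n) → ℝ)
    (hfbar : ∀ (ybar : ℝ) (zbar : EuclideanSpace ℝ (Fin n)),
      fbar ybar zbar =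
        Real.exp a * (f (Real.exp (-a) * ybar) (Real.exp (-a) • zbar) - f 0 0)
          - α * ybar - ⟪γ, zbar⟫) :
    ∀ (ybar₁ ybar₂ : ℝ) (zbar₁ zbar₂ : EuclideanSpace ℝ (Fin n)),
      |fbar ybar₁ zbar₁ - fbar ybar₂ zbar₂| ≤
        ((r * Real.exp L) * |ybar₁ - ybar₂| + (θ * Real.exp L) * ‖zbar₁ - zbar₂‖) *
          ((r * Real.exp L) * (|ybar₁| + |ybar₂|) +
            (θ * Real.exp L) * (‖zbar₁‖ + ‖zbar₂‖)) := by
  have hfbar_eq : fbar = rescaleGenerator f α γ (Real.exp (-a)) := by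
    funext y z
    rw [hfbar, rescaleGenerator, Real.exp_neg, inv_inv]
  have hscale : √(Real.exp (-a)) ^ 2 ≤ Real.exp L ^ 2 := by
    rw [Real.sq_sqrt (Real.exp_pos _).le, ← Real.exp_nat_mul, Real.exp_le_exp]
    push_cast
    linarith [neg_le_abs a, (abs_nonneg a).trans ha]
  have hbar : QuadraticLipschitz fbar 0 0 (r * Real.exp L) (θ * Real.exp L) := by
    rw [hfbar_eq]
    exact ((show QuadraticLipschitz f α γ r θ from hf).rescaleGenerator (Real.exp_pos _)).of_sq_le
      (Real.sqrt_pos.2 (Real.exp_pos _)).ne' hscale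
  exact quadraticLipschitz_zero_zero_iff.1 hbar

/-- first assertion of Lemma 1 of the paper.
If `f : ℝ × ℝⁿ → ℝ` satisfies the quadratic-Lipschitz estimate of condition A) with data
`(α, γ, r, θ)`, and `|a| ≤ L`, then the rescaled generator
`f̄(ȳ,z̄) = eᵃ·(f(e⁻ᵃȳ, e⁻ᵃz̄) − f(0,0)) − α·ȳ − ⟨γ, z̄⟩`
satisfies the estimate with data `(0, 0, r·e^L, θ·e^L)`. -/
theorem stmt_3 (n : ℕ) (hn : 1 ≤ n) (r θ L : ℝ) (hr : 0 ≤ r) (hθ : 0 ≤ θ) (hL : 0 ≤ L)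
    (α : ℝ) (γ : EuclideanSpace ℝ (Fin n))
    (f : ℝ → EuclideanSpace ℝ (Fin n) → ℝ)
    (hf : ∀ (y₁ y₂ : ℝ) (z₁ z₂ : EuclideanSpace ℝ (Fin n)),
      |f y₁ z₁ - f y₂ z₂ - α * (y₁ - y₂) - ⟪γ, z₁ - z₂⟫| ≤
        (r * |y₁ - y₂| + θ * ‖z₁ - z₂‖) * (r * (|y₁| + |y₂|) + θ * (‖z₁‖ + ‖z₂‖)))
    (a : ℝ) (ha : |a| ≤ L)
    (fbar : ℝ → EuclideanSpace ℝ (Fin n) → ℝ)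
    (hfbar : ∀ (ybar : ℝ) (zbar : EuclideanSpace ℝ (Fin n)),
      fbar ybar zbar =
        Real.exp a * (f (Real.exp (-a) * ybar) (Real.exp (-a) • zbar) - f 0 0)
          - α * ybar - ⟪γ, zbar⟫) :
    ∀ (ybar₁ ybar₂ : ℝ) (zbar₁ zbar₂ : EuclideanSpace ℝ (Fin n)),
      |fbar ybar₁ zbar₁ - fbar ybar₂ zbar₂| ≤
        ((r * Real.exp L) * |ybar₁ - ybar₂| + (θ * Real.exp L) * ‖zbar₁ - zbar₂‖) *
          ((r * Real.exp L) * (|ybar₁| + |ybar₂|) +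
            (θ * Real.exp L) * (‖zbar₁‖ + ‖zbar₂‖)) :=
  stmt_3_general n r θ L α γ f hf a ha fbar hfbar
end
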